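/- (Vanishing of successive differences.) Under the algorithm setup with Assumption 1 and Condition (C1): lim_{n→∞} ‖H_{n+1} − H_n‖_F = 0 and lim_{n→∞} ‖W_{n+1} − W_n‖_F = 0. -/

import Mathlib

/-!
With the Frobenius inner product `fip`, real matrices form a Euclidean space whose norm is `frob`.
For `A = Wᵀ W` one has `‖A Z‖² ≤ ‖A‖_F ⟪Z, A Z⟫`, so the gradient step `Z ↦ Z - μ A Z` is
nonexpansive as soon as `μ ‖A‖_F ≤ 2`; composed with the nonexpansive projection `P₊`, and since
the affine part `μ Wᵀ V` cancels in differences, every `T_n` is nonexpansive, and likewise every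
`S_n`. A Krasnosel'skiĭ–Mann step `x' = α x + (1 - α) T x` towards a common fixed point `p` obeys
`‖x' - p‖² ≤ ‖x - p‖² - α (1 - α) ‖T x - x‖²`, so `∑ αₙ (1 - αₙ) ‖T xₙ - xₙ‖²` converges. By (C1)
the weights `αₙ (1 - αₙ)` stay away from `0`, hence `‖T xₙ - xₙ‖ → 0`, and
`x_{n+1} - x_n = (1 - αₙ) (T xₙ - xₙ)`.
-/

open Matrix Filter

/-- Frobenius norm of a real matrix. -/
noncomputable def frob {m n : Type*} [Fintype m] [Fintype n] (X : Matrix m n ℝ) : ℝ :=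
  Real.sqrt (∑ i, ∑ j, (X i j) ^ 2)

/-- Frobenius inner product of two real matrices. -/
noncomputable def fip {m n : Type*} [Fintype m] [Fintype n] (X Y : Matrix m n ℝ) : ℝ :=
  ∑ i, ∑ j, X i j * Y i j

/-- Entrywise projection onto the nonnegative orthant. -/
def pplus {m n : Type*} (X : Matrix m n ℝ) : Matrix m n ℝ :=
  Matrix.of fun i j => max (X i j) 0

/-- Entrywise nonnegativity of a matrix. -/
def matNonneg {m n : Type*} (X : Matrix m n ℝ) : Prop := ∀ i j, 0 ≤ X i j

open scoped RealInnerProductSpace Topology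

lemma tendsto_zero_of_add_le {a c : ℕ → ℝ} {m₀ : ℕ} (ha : ∀ n, 0 ≤ a n) (hc : ∀ n, 0 ≤ c n)
    (h : ∀ n ≥ m₀, a (n + 1) + c n ≤ a n) : Tendsto c atTop (𝓝 0) := by
  have htelescope : ∀ K, ∑ k ∈ Finset.range K, c (k + m₀) + a (K + m₀) ≤ a m₀ := by
    intro K
    induction K with
    | zero => simp
    | succ K ih =>
      rw [Finset.sum_range_succ, Nat.succ_add]
      linarith [h (K + m₀) (Nat.le_add_left _ _)]
  have hsum : Summable fun k => c (k + m₀) :=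
    summable_of_sum_range_le (fun k => hc _) fun K => by linarith [htelescope K, ha (K + m₀)]
  exact (tendsto_add_atTop_iff_nat m₀).mp hsum.tendsto_atTop_zero

lemma exists_pos_eventually_le_mul_one_sub {α : ℕ → ℝ} (hα : ∀ n, α n ∈ Set.Icc (0:ℝ) 1)
    (hlim : 0 < atTop.liminf (fun n => α n) ∧ atTop.limsup (fun n => α n) < 1) :
    ∃ δ > 0, ∀ᶠ n in atTop, δ ≤ α n * (1 - α n) := by
  obtain ⟨l, hl, hlα⟩ := exists_between hlim.1
  obtain ⟨u, hαu, hu⟩ := exists_between hlim.2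
  have hbelow : ∀ᶠ n in atTop, l < α n :=
    eventually_lt_of_lt_liminf hlα (isBoundedUnder_of ⟨0, fun n => (hα n).1⟩)
  have habove : ∀ᶠ n in atTop, α n < u :=
    eventually_lt_of_limsup_lt hαu (isBoundedUnder_of ⟨1, fun n => (hα n).2⟩)
  refine ⟨l * (1 - u), mul_pos hl (sub_pos.mpr hu), ?_⟩
  filter_upwards [hbelow, habove] with n hl' hu'
  exact mul_le_mul hl'.le (by linarith) (by linarith) (hα n).1

section InnerProductSpace

variable {E F : Type*} [NormedAddCommGroup E] [InnerProductSpace ℝ E]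
  [NormedAddCommGroup F] [InnerProductSpace ℝ F]

lemma norm_smul_add_one_sub_smul_sq (a : ℝ) (x y : E) :
    ‖a • x + (1 - a) • y‖ ^ 2 =
      a * ‖x‖ ^ 2 + (1 - a) * ‖y‖ ^ 2 - a * (1 - a) * ‖x - y‖ ^ 2 := by
  rw [norm_add_sq_real, norm_sub_sq_real, norm_smul, norm_smul, real_inner_smul_left,
    real_inner_smul_right, mul_pow, mul_pow, Real.norm_eq_abs, Real.norm_eq_abs, sq_abs, sq_abs]
  ring

lemma norm_adjoint_apply_sq_le {B : E → F} {B' : F → E} (hB : ∀ u x, ⟪B' u, x⟫ = ⟪u, B x⟫)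
    {L : ℝ} (hL : ∀ x, ‖B' (B x)‖ ≤ L * ‖x‖) (x : E) :
    ‖B' (B x)‖ ^ 2 ≤ L * ‖B x‖ ^ 2 := by
  set y := B' (B x)
  have hy : ‖y‖ ^ 2 ≤ ‖B x‖ * ‖B y‖ := by
    rw [← real_inner_self_eq_norm_sq, hB]; exact real_inner_le_norm _ _
  have hBy : ‖B y‖ ^ 2 ≤ L * ‖y‖ ^ 2 := by
    rw [← real_inner_self_eq_norm_sq, ← hB]
    calc ⟪B' (B y), y⟫ ≤ ‖B' (B y)‖ * ‖y‖ := real_inner_le_norm _ _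
      _ ≤ L * ‖y‖ * ‖y‖ := by gcongr; exact hL y
      _ = L * ‖y‖ ^ 2 := by ring
  rcases (norm_nonneg y).eq_or_lt with h0 | hpos
  · have hBx : ‖B x‖ ^ 2 = ⟪y, x⟫ := by rw [hB, real_inner_self_eq_norm_sq]
    rw [hBx, norm_eq_zero.mp h0.symm]
    simp
  · have h4 : ‖y‖ ^ 2 * ‖y‖ ^ 2 ≤ L * ‖B x‖ ^ 2 * ‖y‖ ^ 2 :=
      calc ‖y‖ ^ 2 * ‖y‖ ^ 2 ≤ (‖B x‖ * ‖B y‖) ^ 2 := by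
            rw [← sq]; exact pow_le_pow_left₀ (sq_nonneg _) hy 2
        _ = ‖B x‖ ^ 2 * ‖B y‖ ^ 2 := mul_pow _ _ _
        _ ≤ ‖B x‖ ^ 2 * (L * ‖y‖ ^ 2) := by gcongr
        _ = L * ‖B x‖ ^ 2 * ‖y‖ ^ 2 := by ring
    exact le_of_mul_le_mul_right h4 (by positivity)

lemma norm_sub_smul_adjoint_apply_le {B : E → F} {B' : F → E}
    (hB : ∀ u x, ⟪B' u, x⟫ = ⟪u, B x⟫) {L μ : ℝ} (hL : ∀ x, ‖B' (B x)‖ ≤ L * ‖x‖)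
    (hμ : 0 ≤ μ) (hμL : μ * L ≤ 2) (x : E) :
    ‖x - μ • B' (B x)‖ ≤ ‖x‖ := by
  have hinner : ⟪x, B' (B x)⟫ = ‖B x‖ ^ 2 := by
    rw [real_inner_comm, hB, real_inner_self_eq_norm_sq]
  have hkey := norm_adjoint_apply_sq_le hB hL x
  refine (sq_le_sq₀ (norm_nonneg _) (norm_nonneg _)).mp ?_
  rw [norm_sub_sq_real, norm_smul, real_inner_smul_right, hinner, mul_pow, Real.norm_eq_abs,
    sq_abs]
  nlinarith [mul_nonneg hμ (sq_nonneg ‖B x‖), mul_le_mul_of_nonneg_left hkey (sq_nonneg μ)]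

lemma norm_krasnoselskiiMann_sub_sq_le {a : ℝ} (ha : a ∈ Set.Icc (0:ℝ) 1) {x y p : E}
    (hy : ‖y - p‖ ≤ ‖x - p‖) :
    ‖a • x + (1 - a) • y - p‖ ^ 2 ≤ ‖x - p‖ ^ 2 - a * (1 - a) * ‖y - x‖ ^ 2 := by
  have hsplit : a • x + (1 - a) • y - p = a • (x - p) + (1 - a) • (y - p) := by module
  have hsq : ‖y - p‖ ^ 2 ≤ ‖x - p‖ ^ 2 := pow_le_pow_left₀ (norm_nonneg _) hy 2
  rw [hsplit, norm_smul_add_one_sub_smul_sq, sub_sub_sub_cancel_right, norm_sub_rev x y]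
  nlinarith [ha.1, ha.2]

theorem tendsto_norm_succ_sub_of_krasnoselskiiMann {T : ℕ → E → E} {x : ℕ → E} {α : ℕ → ℝ}
    {p : E} {m₀ : ℕ} (hT : ∀ n ≥ m₀, ∀ y, ‖T n y - p‖ ≤ ‖y - p‖)
    (hα : ∀ n, α n ∈ Set.Icc (0:ℝ) 1)
    (hlim : 0 < atTop.liminf (fun n => α n) ∧ atTop.limsup (fun n => α n) < 1)
    (hx : ∀ n, x (n + 1) = α n • x n + (1 - α n) • T n (x n)) :
    Tendsto (fun n => ‖x (n + 1) - x n‖) atTop (𝓝 0) := by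
  set r := fun n => ‖T n (x n) - x n‖
  have hweight : ∀ n, 0 ≤ α n * (1 - α n) := fun n => mul_nonneg (hα n).1 (sub_nonneg.2 (hα n).2)
  have hdescent : Tendsto (fun n => α n * (1 - α n) * r n ^ 2) atTop (𝓝 0) :=
    tendsto_zero_of_add_le (a := fun n => ‖x n - p‖ ^ 2) (fun n => sq_nonneg _)
      (fun n => mul_nonneg (hweight n) (sq_nonneg _)) fun n hn => by
        have := norm_krasnoselskiiMann_sub_sq_le (hα n) (hT n hn (x n))
        rw [hx n]; linarith
  obtain ⟨δ, hδ, hδα⟩ := exists_pos_eventually_le_mul_one_sub hα hlim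
  have hr_sq : Tendsto (fun n => r n ^ 2) atTop (𝓝 0) := by
    refine squeeze_zero' (.of_forall fun n => sq_nonneg _) (hδα.mono fun n hn => ?_)
      (by simpa using hdescent.const_mul δ⁻¹)
    rw [mul_assoc, le_inv_mul_iff₀ hδ, ← mul_assoc]
    exact mul_le_mul_of_nonneg_right hn (sq_nonneg _)
  have hr : Tendsto r atTop (𝓝 0) := by
    simpa [r, Real.sqrt_sq (norm_nonneg _)] using hr_sq.sqrt
  refine squeeze_zero (fun n => norm_nonneg _) (fun n => ?_) hr
  have hstep : x (n + 1) - x n = (1 - α n) • (T n (x n) - x n) := by rw [hx n]; module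
  rw [hstep, norm_smul, Real.norm_of_nonneg (sub_nonneg.2 (hα n).2)]
  exact mul_le_of_le_one_left (norm_nonneg _) (by linarith [(hα n).1])

end InnerProductSpace

section FrobeniusNorm

attribute [local instance] Matrix.frobeniusNormedAddCommGroup

variable {l m n : Type*} [Fintype l] [Fintype m] [Fintype n]

lemma frob_eq_frobenius_norm (X : Matrix m n ℝ) : frob X = ‖X‖ := by
  rw [frobenius_norm_def, frob, Real.sqrt_eq_rpow]
  simp [Real.norm_eq_abs, sq_abs]

lemma frob_mul_le (A : Matrix l m ℝ) (B : Matrix m n ℝ) : frob (A * B) ≤ frob A * frob B := by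
  simpa only [frob_eq_frobenius_norm] using frobenius_norm_mul A B

end FrobeniusNorm

namespace Matrix

variable {l m n : Type*} [Fintype l] [Fintype m] [Fintype n]

lemma fip_eq_trace (X Y : Matrix m n ℝ) : fip X Y = trace (Xᵀ * Y) := by
  simp only [fip, trace, diag, mul_apply, transpose_apply]
  exact Finset.sum_comm

lemma fip_transpose_mul_left (W : Matrix l m ℝ) (U : Matrix l n ℝ) (Z : Matrix m n ℝ) :
    fip (Wᵀ * U) Z = fip U (W * Z) := by
  rw [fip_eq_trace, fip_eq_trace, transpose_mul, transpose_transpose, Matrix.mul_assoc]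

lemma fip_mul_transpose_left (H : Matrix m n ℝ) (U : Matrix l n ℝ) (Z : Matrix l m ℝ) :
    fip (U * Hᵀ) Z = fip U (Z * H) := by
  rw [fip_eq_trace, fip_eq_trace, transpose_mul, transpose_transpose, Matrix.mul_assoc,
    trace_mul_comm, Matrix.mul_assoc]

lemma fip_self_eq_sum_sq (X : Matrix m n ℝ) : fip X X = ∑ i, ∑ j, X i j ^ 2 := by
  simp only [fip, sq]

lemma frob_eq_sqrt_fip (X : Matrix m n ℝ) : frob X = √(fip X X) := by
  rw [frob, fip_self_eq_sum_sq]

lemma frob_transpose_mul_self (H : Matrix m n ℝ) : frob (Hᵀ * H) = frob (H * Hᵀ) := by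
  rw [frob_eq_sqrt_fip, frob_eq_sqrt_fip, fip_eq_trace, fip_eq_trace]
  simp only [transpose_mul, transpose_transpose, Matrix.mul_assoc]
  rw [trace_mul_comm Hᵀ]
  simp only [Matrix.mul_assoc]

lemma frob_pplus_sub_pplus_le (X Y : Matrix m n ℝ) : frob (pplus X - pplus Y) ≤ frob (X - Y) := by
  refine Real.sqrt_le_sqrt (Finset.sum_le_sum fun i _ => Finset.sum_le_sum fun j _ => ?_)
  simpa only [pplus, sub_apply, of_apply, sq_abs] using
    pow_le_pow_left₀ (abs_nonneg _) (abs_max_sub_max_le_abs (X i j) (Y i j) 0) 2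

@[reducible] noncomputable def frobeniusInnerProductCore :
    InnerProductSpace.Core ℝ (Matrix m n ℝ) where
  inner := fip
  conj_inner_symm X Y := by simp [fip, mul_comm]
  re_inner_nonneg X := by
    simpa [fip_self_eq_sum_sq] using
      Finset.sum_nonneg fun i _ => Finset.sum_nonneg fun j _ => sq_nonneg (X i j)
  add_left X Y Z := by simp [fip, add_mul, Finset.sum_add_distrib]
  smul_left X Y r := by simp [fip, Finset.mul_sum, mul_assoc]
  definite X h := by
    ext i j
    rw [fip_self_eq_sum_sq, Finset.sum_eq_zero_iff_of_nonneg fun i _ =>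
      Finset.sum_nonneg fun j _ => sq_nonneg (X i j)] at h
    have := h i (Finset.mem_univ i)
    rw [Finset.sum_eq_zero_iff_of_nonneg fun j _ => sq_nonneg (X i j)] at this
    simpa using this j (Finset.mem_univ j)

attribute [local instance] frobeniusInnerProductCore

@[reducible] noncomputable def frobeniusInnerNormedAddCommGroup :
    NormedAddCommGroup (Matrix m n ℝ) :=
  InnerProductSpace.Core.toNormedAddCommGroup (𝕜 := ℝ)

attribute [local instance] frobeniusInnerNormedAddCommGroup

@[reducible] noncomputable def frobeniusInnerProductSpace : InnerProductSpace ℝ (Matrix m n ℝ) :=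
  InnerProductSpace.ofCore _

attribute [local instance] frobeniusInnerProductSpace

lemma inner_eq_fip (X Y : Matrix m n ℝ) : ⟪X, Y⟫ = fip X Y := rfl

lemma norm_eq_frob (X : Matrix m n ℝ) : ‖X‖ = frob X := by
  rw [frob_eq_sqrt_fip, norm_eq_sqrt_real_inner, inner_eq_fip]

lemma projGradientLeft_nonexpansive (W : Matrix l m ℝ) (V : Matrix l n ℝ) {μ : ℝ} (hμ : 0 ≤ μ)
    (hμW : μ ≤ 2 / frob (Wᵀ * W)) (X Y : Matrix m n ℝ) :
    frob (pplus (X - μ • (Wᵀ * (W * X - V))) - pplus (Y - μ • (Wᵀ * (W * Y - V))))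
      ≤ frob (X - Y) := by
  have harg : X - μ • (Wᵀ * (W * X - V)) - (Y - μ • (Wᵀ * (W * Y - V)))
      = (X - Y) - μ • (Wᵀ * (W * (X - Y))) := by
    simp only [Matrix.mul_sub, smul_sub]; abel
  refine (frob_pplus_sub_pplus_le _ _).trans ?_
  rw [harg, ← norm_eq_frob, ← norm_eq_frob]
  refine norm_sub_smul_adjoint_apply_le (B := (W * ·)) (B' := (Wᵀ * ·)) (L := frob (Wᵀ * W))
    (fun U Z => fip_transpose_mul_left W U Z) (fun Z => ?_) hμ
    (mul_le_of_le_div₀ zero_le_two (Real.sqrt_nonneg _) hμW) _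
  rw [norm_eq_frob, norm_eq_frob, ← Matrix.mul_assoc]
  exact frob_mul_le _ _

lemma projGradientRight_nonexpansive (H : Matrix m n ℝ) (V : Matrix l n ℝ) {μ : ℝ} (hμ : 0 ≤ μ)
    (hμH : μ ≤ 2 / frob (Hᵀ * H)) (X Y : Matrix l m ℝ) :
    frob (pplus (X - μ • ((X * H - V) * Hᵀ)) - pplus (Y - μ • ((Y * H - V) * Hᵀ)))
      ≤ frob (X - Y) := by
  have harg : X - μ • ((X * H - V) * Hᵀ) - (Y - μ • ((Y * H - V) * Hᵀ))
      = (X - Y) - μ • ((X - Y) * H * Hᵀ) := by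
    simp only [Matrix.sub_mul, smul_sub]; abel
  refine (frob_pplus_sub_pplus_le _ _).trans ?_
  rw [harg, ← norm_eq_frob, ← norm_eq_frob]
  refine norm_sub_smul_adjoint_apply_le (B := (· * H)) (B' := (· * Hᵀ)) (L := frob (Hᵀ * H))
    (fun U Z => fip_mul_transpose_left H U Z) (fun Z => ?_) hμ
    (mul_le_of_le_div₀ zero_le_two (Real.sqrt_nonneg _) hμH) _
  rw [norm_eq_frob, norm_eq_frob, Matrix.mul_assoc, frob_transpose_mul_self, mul_comm]
  exact frob_mul_le _ _

theorem tendsto_frob_succ_sub_of_krasnoselskiiMann {T : ℕ → Matrix m n ℝ → Matrix m n ℝ}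
    {x : ℕ → Matrix m n ℝ} {α : ℕ → ℝ} {p : Matrix m n ℝ} {m₀ : ℕ}
    (hT : ∀ n ≥ m₀, ∀ y, frob (T n y - p) ≤ frob (y - p))
    (hα : ∀ n, α n ∈ Set.Icc (0:ℝ) 1)
    (hlim : 0 < atTop.liminf (fun n => α n) ∧ atTop.limsup (fun n => α n) < 1)
    (hx : ∀ n, x (n + 1) = α n • x n + (1 - α n) • T n (x n)) :
    Tendsto (fun n => frob (x (n + 1) - x n)) atTop (𝓝 0) := by
  simp only [← norm_eq_frob] at hT ⊢
  exact tendsto_norm_succ_sub_of_krasnoselskiiMann hT hα hlim hx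

end Matrix

theorem stmt_14_general
    (M N R : ℕ)
    (V : Matrix (Fin M) (Fin N) ℝ)
    (W : ℕ → Matrix (Fin M) (Fin R) ℝ) (H : ℕ → Matrix (Fin R) (Fin N) ℝ)
    (α β μ lam : ℕ → ℝ)
    (T : ℕ → Matrix (Fin R) (Fin N) ℝ → Matrix (Fin R) (Fin N) ℝ)
    (S : ℕ → Matrix (Fin M) (Fin R) ℝ → Matrix (Fin M) (Fin R) ℝ)
    (hα : ∀ n, α n ∈ Set.Icc (0:ℝ) 1) (hβ : ∀ n, β n ∈ Set.Icc (0:ℝ) 1)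
    (hμ : ∀ n, W n ≠ 0 → 0 < μ n ∧ μ n ≤ 2 / frob ((W n)ᵀ * W n))
    (hT : ∀ n, W n ≠ 0 → ∀ X, T n X = pplus (X - μ n • ((W n)ᵀ * (W n * X - V))))
    (hT0 : ∀ n, W n = 0 → ∀ X, T n X = X)
    (hHrec : ∀ n, H (n + 1) = α n • H n + (1 - α n) • T n (H n))
    (hlam : ∀ n, H (n + 1) ≠ 0 → 0 < lam n ∧ lam n ≤ 2 / frob ((H (n + 1))ᵀ * H (n + 1)))
    (hS : ∀ n, H (n + 1) ≠ 0 → ∀ X, S n X = pplus (X - lam n • ((X * H (n + 1) - V) * (H (n + 1))ᵀ)))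
    (hS0 : ∀ n, H (n + 1) = 0 → ∀ X, S n X = X)
    (hWrec : ∀ n, W (n + 1) = β n • W n + (1 - β n) • S n (W n))
    (hA1 : ∃ m₀ : ℕ,
      (∃ Wf : Matrix (Fin M) (Fin R) ℝ, ∀ n ≥ m₀, S n Wf = Wf) ∧
      (∃ Hf : Matrix (Fin R) (Fin N) ℝ, ∀ n ≥ m₀, T n Hf = Hf))
    (hC1α : 0 < atTop.liminf (fun n => α n) ∧ atTop.limsup (fun n => α n) < 1)
    (hC1β : 0 < atTop.liminf (fun n => β n) ∧ atTop.limsup (fun n => β n) < 1)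
    :
    Tendsto (fun n => frob (H (n + 1) - H n)) atTop (nhds 0) ∧
    Tendsto (fun n => frob (W (n + 1) - W n)) atTop (nhds 0) := by
  obtain ⟨m₀, ⟨Wf, hWf⟩, ⟨Hf, hHf⟩⟩ := hA1
  have hT_nonexpansive : ∀ n X Y, frob (T n X - T n Y) ≤ frob (X - Y) := by
    intro n X Y
    by_cases hWn : W n = 0
    · rw [hT0 n hWn, hT0 n hWn]
    · rw [hT n hWn, hT n hWn]
      exact projGradientLeft_nonexpansive _ _ (hμ n hWn).1.le (hμ n hWn).2 X Y
  have hS_nonexpansive : ∀ n X Y, frob (S n X - S n Y) ≤ frob (X - Y) := by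
    intro n X Y
    by_cases hHn : H (n + 1) = 0
    · rw [hS0 n hHn, hS0 n hHn]
    · rw [hS n hHn, hS n hHn]
      exact projGradientRight_nonexpansive _ _ (hlam n hHn).1.le (hlam n hHn).2 X Y
  refine ⟨tendsto_frob_succ_sub_of_krasnoselskiiMann (p := Hf) (m₀ := m₀) ?_ hα hC1α hHrec,
    tendsto_frob_succ_sub_of_krasnoselskiiMann (p := Wf) (m₀ := m₀) ?_ hβ hC1β hWrec⟩
  · intro n hn X
    simpa only [hHf n hn] using hT_nonexpansive n X Hf
  · intro n hn X
    simpa only [hWf n hn] using hS_nonexpansive n X Wf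

theorem stmt_14
    (M N R : ℕ) (hM : 0 < M) (hN : 0 < N) (hR : 0 < R)
    (V : Matrix (Fin M) (Fin N) ℝ)
    (W : ℕ → Matrix (Fin M) (Fin R) ℝ) (H : ℕ → Matrix (Fin R) (Fin N) ℝ)
    (α β μ lam : ℕ → ℝ)
    (T : ℕ → Matrix (Fin R) (Fin N) ℝ → Matrix (Fin R) (Fin N) ℝ)
    (S : ℕ → Matrix (Fin M) (Fin R) ℝ → Matrix (Fin M) (Fin R) ℝ)
    (hW0 : matNonneg (W 0)) (hH0 : matNonneg (H 0))
    (hα : ∀ n, α n ∈ Set.Icc (0:ℝ) 1) (hβ : ∀ n, β n ∈ Set.Icc (0:ℝ) 1)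
    (hμ : ∀ n, W n ≠ 0 → 0 < μ n ∧ μ n ≤ 2 / frob ((W n)ᵀ * W n))
    (hT : ∀ n, W n ≠ 0 → ∀ X, T n X = pplus (X - μ n • ((W n)ᵀ * (W n * X - V))))
    (hT0 : ∀ n, W n = 0 → ∀ X, T n X = X)
    (hHrec : ∀ n, H (n + 1) = α n • H n + (1 - α n) • T n (H n))
    (hlam : ∀ n, H (n + 1) ≠ 0 → 0 < lam n ∧ lam n ≤ 2 / frob ((H (n + 1))ᵀ * H (n + 1)))
    (hS : ∀ n, H (n + 1) ≠ 0 → ∀ X, S n X = pplus (X - lam n • ((X * H (n + 1) - V) * (H (n + 1))ᵀ)))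
    (hS0 : ∀ n, H (n + 1) = 0 → ∀ X, S n X = X)
    (hWrec : ∀ n, W (n + 1) = β n • W n + (1 - β n) • S n (W n))
    (hA1 : ∃ m₀ : ℕ,
      (∃ Wf : Matrix (Fin M) (Fin R) ℝ, ∀ n ≥ m₀, S n Wf = Wf) ∧
      (∃ Hf : Matrix (Fin R) (Fin N) ℝ, ∀ n ≥ m₀, T n Hf = Hf))
    (hC1α : 0 < atTop.liminf (fun n => α n) ∧ atTop.limsup (fun n => α n) < 1)
    (hC1β : 0 < atTop.liminf (fun n => β n) ∧ atTop.limsup (fun n => β n) < 1)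
    :
    Tendsto (fun n => frob (H (n + 1) - H n)) atTop (nhds 0) ∧
    Tendsto (fun n => frob (W (n + 1) - W n)) atTop (nhds 0) :=
  stmt_14_general M N R V W H α β μ lam T S hα hβ hμ hT hT0 hHrec hlam hS hS0 hWrec hA1 hC1α hC1β
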